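/- Assume k is algebraically closed of characteristic different from 2 and 3, and that the sextic surface S determined by f and g is smooth (in the encoded sense), i.e. S is a del Pezzo surface of degree 1. Let Δ = 4f³ + 27g² ∈ k[z,w]. Then: (1) Δ ≠ 0; (2) for every nonzero linear form ℓ ∈ k[z,w], ℓ³ does not divide Δ; (3) for every nonzero linear form ℓ ∈ k[z,w], if ℓ² divides Δ then ℓ divides f; (4) letting M (respectively N) be the number of points (a : b) of P¹(k) such that the linear form b·z − a·w divides Δ exactly once (respectively exactly twice), one has M + 2N = 12 (M is the number of nodal fibers and N the number of cuspidal fibers of the anticanonical elliptic fibration of S); (5) if f ≠ 0 (i.e. the fibration is not isotrivial), then M ≥ 4. -/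

import Mathlib

open Polynomial

noncomputable section


/-- The affine chart `w = 1` of the sextic `y² = x³ + f(z,w)x + g(z,w)` in `ℙ(2,3,1,1)`,
as a polynomial in the variables `x = X 0`, `y = X 1`, `t = X 2`. -/
def chart1 {k : Type*} [Field k] (f : Fin 5 → k) (g : Fin 7 → k) : MvPolynomial (Fin 3) k :=
  - (MvPolynomial.X 1) ^ 2 + (MvPolynomial.X 0) ^ 3
    + (∑ i : Fin 5, MvPolynomial.C (f i) * (MvPolynomial.X 2) ^ (i : ℕ)) * MvPolynomial.X 0
    + ∑ j : Fin 7, MvPolynomial.C (g j) * (MvPolynomial.X 2) ^ (j : ℕ)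

/-- The affine chart `z = 1`. -/
def chart2 {k : Type*} [Field k] (f : Fin 5 → k) (g : Fin 7 → k) : MvPolynomial (Fin 3) k :=
  - (MvPolynomial.X 1) ^ 2 + (MvPolynomial.X 0) ^ 3
    + (∑ i : Fin 5, MvPolynomial.C (f i) * (MvPolynomial.X 2) ^ (4 - (i : ℕ))) * MvPolynomial.X 0
    + ∑ j : Fin 7, MvPolynomial.C (g j) * (MvPolynomial.X 2) ^ (6 - (j : ℕ))

/-- Smoothness of the sextic surface, encoded by the Jacobian criterion on the two affine
charts, with common zeros sought in the algebraic closure. -/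
def SmoothSextic (k : Type*) [Field k] (f : Fin 5 → k) (g : Fin 7 → k) : Prop :=
  (∀ v : Fin 3 → AlgebraicClosure k,
      ¬ (MvPolynomial.aeval v (chart1 f g) = 0 ∧
        ∀ s : Fin 3, MvPolynomial.aeval v (MvPolynomial.pderiv s (chart1 f g)) = 0)) ∧
  (∀ v : Fin 3 → AlgebraicClosure k,
      ¬ (MvPolynomial.aeval v (chart2 f g) = 0 ∧
        ∀ s : Fin 3, MvPolynomial.aeval v (MvPolynomial.pderiv s (chart2 f g)) = 0))

/-- Zariski density of the `k`-rational points of the sextic surface, encoded on the affine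
chart `w = 1`: every polynomial `h ∈ k[x,y,t]` vanishing on all `k`-points of the chart lies
in the ideal generated by the defining equation. -/
def DenseRatPoints (k : Type*) [Field k] (f : Fin 5 → k) (g : Fin 7 → k) : Prop :=
  ∀ h : MvPolynomial (Fin 3) k,
    (∀ x y t : k,
        y ^ 2 = x ^ 3 + (∑ i : Fin 5, f i * t ^ (i : ℕ)) * x + ∑ j : Fin 7, g j * t ^ (j : ℕ) →
        MvPolynomial.eval ![x, y, t] h = 0) →
    h ∈ Ideal.span {((MvPolynomial.X 1 : MvPolynomial (Fin 3) k) ^ 2 - (MvPolynomial.X 0) ^ 3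
      - (∑ i : Fin 5, MvPolynomial.C (f i) * (MvPolynomial.X 2) ^ (i : ℕ)) * MvPolynomial.X 0
      - ∑ j : Fin 7, MvPolynomial.C (g j) * (MvPolynomial.X 2) ^ (j : ℕ))}


/-- `f(z,w)` as a bivariate polynomial, with `z = X 0`, `w = X 1`. -/
def fpoly {k : Type*} [Field k] (f : Fin 5 → k) : MvPolynomial (Fin 2) k :=
  ∑ i : Fin 5, MvPolynomial.C (f i) * (MvPolynomial.X 0) ^ (i : ℕ)
    * (MvPolynomial.X 1) ^ (4 - (i : ℕ))

/-- `g(z,w)` as a bivariate polynomial, with `z = X 0`, `w = X 1`. -/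
def gpoly {k : Type*} [Field k] (g : Fin 7 → k) : MvPolynomial (Fin 2) k :=
  ∑ j : Fin 7, MvPolynomial.C (g j) * (MvPolynomial.X 0) ^ (j : ℕ)
    * (MvPolynomial.X 1) ^ (6 - (j : ℕ))

/-- The linear form `b·z − a·w` attached to the point `(a : b)` of `ℙ¹`. -/
def linForm {k : Type*} [Field k] (a b : k) : MvPolynomial (Fin 2) k :=
  MvPolynomial.C b * MvPolynomial.X 0 - MvPolynomial.C a * MvPolynomial.X 1

namespace DP1
variable {k : Type*} [Field k]

/-- dehomogenization at `w = 1` -/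
def phi1 {k : Type*} [Field k] : MvPolynomial (Fin 2) k →ₐ[k] Polynomial k :=
  MvPolynomial.aeval ![Polynomial.X, 1]

/-- the linear form `z - c·w` -/
def ell {k : Type*} [Field k] (c : k) : MvPolynomial (Fin 2) k :=
  MvPolynomial.X 0 - MvPolynomial.C c * MvPolynomial.X 1

lemma phi1_ell (c : k) : phi1 (ell c) = X - C c := by
  simp [phi1, ell]

lemma ell_ne_zero (c : k) : ell c ≠ 0 := by
  intro h
  have : (X : k[X]) - C c = 0 := by rw [← phi1_ell, h, map_zero]
  exact X_sub_C_ne_zero c this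

lemma ell_homog (c : k) : (ell c).IsHomogeneous 1 := by
  apply MvPolynomial.IsHomogeneous.sub (MvPolynomial.isHomogeneous_X _ _)
  exact (MvPolynomial.isHomogeneous_X _ _).C_mul _

lemma degree_sum_eq {n : ℕ} {P : MvPolynomial (Fin 2) k} (hP : P.IsHomogeneous n)
    {d : Fin 2 →₀ ℕ} (hd : MvPolynomial.coeff d P ≠ 0) : d 0 + d 1 = n := by
  have hdeg : d.degree = n := by
    by_contra h
    exact hd (hP.coeff_eq_zero h)
  rw [← hdeg, Finsupp.degree_apply]
  rw [show (d.support.sum d : ℕ) = ∑ i : Fin 2, d i from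
    Finset.sum_subset (Finset.subset_univ _) (by
      intro x _ hx
      simpa using (Finsupp.notMem_support_iff).1 hx)]
  simp [Fin.sum_univ_two]

/-- scaling evaluation of a homogeneous polynomial -/
lemma aeval_CW {n : ℕ} {P : MvPolynomial (Fin 2) k} (hP : P.IsHomogeneous n)
    (a b : k) (W : MvPolynomial (Fin 2) k) :
    MvPolynomial.aeval ![MvPolynomial.C a * W, MvPolynomial.C b * W] P
      = MvPolynomial.C (MvPolynomial.eval ![a, b] P) * W ^ n := by
  conv_lhs => rw [P.as_sum]
  conv_rhs => rw [P.as_sum]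
  rw [map_sum, map_sum, map_sum, Finset.sum_mul]
  refine Finset.sum_congr rfl fun d hd => ?_
  have hdeg : d 0 + d 1 = n :=
    degree_sum_eq hP (MvPolynomial.mem_support_iff.1 hd)
  rw [MvPolynomial.aeval_monomial, MvPolynomial.eval_monomial]
  rw [Finsupp.prod_fintype _ _ (fun i => pow_zero _),
      Finsupp.prod_fintype _ _ (fun i => pow_zero _)]
  rw [Fin.prod_univ_two, Fin.prod_univ_two]
  simp only [Matrix.cons_val_zero, Matrix.cons_val_one, Matrix.head_cons,
    MvPolynomial.algebraMap_eq]
  rw [mul_pow, mul_pow, ← hdeg]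
  push_cast [map_mul, map_pow]
  ring

def sub0 {k : Type*} [Field k] : MvPolynomial (Fin 2) k →ₐ[k] MvPolynomial (Fin 2) k :=
  MvPolynomial.aeval ![0, MvPolynomial.X 1]

lemma X0_dvd_sub_sub0 (P : MvPolynomial (Fin 2) k) :
    (MvPolynomial.X 0 : MvPolynomial (Fin 2) k) ∣ P - sub0 P := by
  induction P using MvPolynomial.induction_on with
  | C a => simp [sub0]
  | add p q hp hq =>
      have := dvd_add hp hq
      rw [map_add]
      convert this using 1
      ring
  | mul_X p i hp =>
      rw [map_mul]
      fin_cases i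
      · simp [sub0]
      · simp only [Fin.isValue, Fin.mk_one, sub0, MvPolynomial.aeval_eq_bind₁,
          MvPolynomial.bind₁_X_right, Matrix.cons_val_one, Matrix.head_cons]
        have := hp.mul_right (MvPolynomial.X 1)
        rwa [sub_mul] at this

lemma X0_dvd_iff (P : MvPolynomial (Fin 2) k) :
    (MvPolynomial.X 0 : MvPolynomial (Fin 2) k) ∣ P ↔ sub0 P = 0 := by
  constructor
  · rintro ⟨q, rfl⟩
    rw [map_mul]
    simp [sub0]
  · intro h
    have := X0_dvd_sub_sub0 P
    rwa [h, sub_zero] at this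


lemma eval_phi1 (c : k) (P : MvPolynomial (Fin 2) k) :
    (phi1 P).eval c = MvPolynomial.eval ![c, 1] P := by
  have h : ((Polynomial.aeval c : k[X] →ₐ[k] k).comp phi1)
      = MvPolynomial.aeval ![c, 1] := by
    rw [phi1, MvPolynomial.comp_aeval]
    congr 1
    funext i
    fin_cases i <;> simp
  have h2 := DFunLike.congr_fun h P
  simp only [AlgHom.comp_apply] at h2
  rw [← Polynomial.coe_aeval_eq_eval, h2]
  rfl

/-- shear substitution `z ↦ z + c w` -/
def rho {k : Type*} [Field k] (c : k) : MvPolynomial (Fin 2) k →ₐ[k] MvPolynomial (Fin 2) k :=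
  MvPolynomial.aeval ![MvPolynomial.X 0 + MvPolynomial.C c * MvPolynomial.X 1, MvPolynomial.X 1]

def rho' {k : Type*} [Field k] (c : k) : MvPolynomial (Fin 2) k →ₐ[k] MvPolynomial (Fin 2) k :=
  MvPolynomial.aeval ![MvPolynomial.X 0 - MvPolynomial.C c * MvPolynomial.X 1, MvPolynomial.X 1]

lemma rho'_rho (c : k) (P : MvPolynomial (Fin 2) k) : rho' c (rho c P) = P := by
  have h : ((rho' c).comp (rho c)) = AlgHom.id k (MvPolynomial (Fin 2) k) := by
    rw [rho, MvPolynomial.comp_aeval]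
    apply MvPolynomial.algHom_ext
    intro i
    fin_cases i <;> simp [rho']
  have h2 := DFunLike.congr_fun h P
  simpa using h2

lemma sub0_rho (c : k) (P : MvPolynomial (Fin 2) k) :
    sub0 (rho c P)
      = MvPolynomial.aeval ![MvPolynomial.C c * MvPolynomial.X 1, MvPolynomial.X 1] P := by
  have h : (sub0.comp (rho c))
      = MvPolynomial.aeval ![MvPolynomial.C c * MvPolynomial.X 1, MvPolynomial.X 1] := by
    rw [rho, MvPolynomial.comp_aeval]
    congr 1
    funext i
    fin_cases i <;> simp [sub0]
  have h2 := DFunLike.congr_fun h P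
  simpa using h2

lemma ell_dvd_of_root {n : ℕ} {P : MvPolynomial (Fin 2) k} (hP : P.IsHomogeneous n)
    {c : k} (hc : MvPolynomial.eval ![c, 1] P = 0) : ell c ∣ P := by
  have h1 : sub0 (rho c P) = 0 := by
    have h3 := aeval_CW hP c 1 (MvPolynomial.X 1)
    rw [map_one, one_mul] at h3
    rw [sub0_rho, h3, hc, map_zero, zero_mul]
  obtain ⟨Q, hQ⟩ := (X0_dvd_iff _).2 h1
  refine ⟨rho' c Q, ?_⟩
  have h4 := congrArg (rho' c) hQ
  rw [rho'_rho, map_mul] at h4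
  rw [h4]
  congr 1
  simp [rho', ell]

/-- homogeneity of the cofactor of a linear form -/
lemma quotient_homog {n : ℕ} {L Q : MvPolynomial (Fin 2) k} (hL : L.IsHomogeneous 1)
    (hL0 : L ≠ 0) (hP : (L * Q).IsHomogeneous n) (h0 : L * Q ≠ 0) :
    1 ≤ n ∧ Q.IsHomogeneous (n - 1) := by
  classical
  set m := Q.totalDegree with hm
  have key : ∀ i : ℕ, L * (MvPolynomial.homogeneousComponent i Q)
      = if i + 1 = n then L * Q else 0 := by
    intro i
    have e1 : L * Q = ∑ j ∈ Finset.range (m + 1),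
        L * MvPolynomial.homogeneousComponent j Q := by
      rw [← Finset.mul_sum, MvPolynomial.sum_homogeneousComponent]
    have e2 : MvPolynomial.homogeneousComponent (i + 1) (L * Q)
        = ∑ j ∈ Finset.range (m + 1),
            MvPolynomial.homogeneousComponent (i + 1)
              (L * MvPolynomial.homogeneousComponent j Q) := by
      conv_lhs => rw [e1]
      rw [map_sum]
    have e3 : ∀ j : ℕ, MvPolynomial.homogeneousComponent (i + 1)
          (L * MvPolynomial.homogeneousComponent j Q)
        = if i + 1 = 1 + j then L * MvPolynomial.homogeneousComponent j Q else 0 := by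
      intro j
      exact MvPolynomial.homogeneousComponent_of_mem
        ((MvPolynomial.mem_homogeneousSubmodule _ _).2
          (hL.mul (MvPolynomial.homogeneousComponent_isHomogeneous j Q)))
    have e5 : MvPolynomial.homogeneousComponent (i + 1) (L * Q)
        = if i ∈ Finset.range (m + 1) then L * MvPolynomial.homogeneousComponent i Q
          else 0 := by
      rw [e2, Finset.sum_congr rfl fun j _ => e3 j]
      rw [Finset.sum_congr rfl fun j _ =>
        (if_congr (by omega) rfl rfl :
          (if i + 1 = 1 + j then L * MvPolynomial.homogeneousComponent j Q else 0)
            = if j = i then L * MvPolynomial.homogeneousComponent j Q else 0)]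
      exact Finset.sum_ite_eq' _ _ _
    have e6 : MvPolynomial.homogeneousComponent (i + 1) (L * Q)
        = if i + 1 = n then L * Q else 0 :=
      MvPolynomial.homogeneousComponent_of_mem
        ((MvPolynomial.mem_homogeneousSubmodule _ _).2 hP)
    rw [← e6, e5]
    by_cases hi : i ∈ Finset.range (m + 1)
    · rw [if_pos hi]
    · rw [if_neg hi]
      rw [MvPolynomial.homogeneousComponent_eq_zero i Q (by
        simp only [Finset.mem_range] at hi; omega), mul_zero]
  have hn : 1 ≤ n := by
    by_contra hn
    have hn0 : n = 0 := by omega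
    apply h0
    conv_lhs => rw [← MvPolynomial.sum_homogeneousComponent Q]
    rw [Finset.mul_sum]
    apply Finset.sum_eq_zero
    intro j _
    rw [key j, if_neg (by omega)]
  refine ⟨hn, ?_⟩
  have hQ : Q = MvPolynomial.homogeneousComponent (n - 1) Q := by
    conv_lhs => rw [← MvPolynomial.sum_homogeneousComponent Q]
    by_cases hmem : n - 1 ∈ Finset.range (m + 1)
    · rw [Finset.sum_eq_single (n - 1)]
      · intro j hj hjne
        have : L * MvPolynomial.homogeneousComponent j Q = 0 := by
          rw [key j, if_neg (by omega)]
        exact (mul_eq_zero.1 this).resolve_left hL0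
      · intro h; exact absurd hmem h
    · rw [Finset.sum_eq_zero, MvPolynomial.homogeneousComponent_eq_zero (n-1) Q (by
        simp only [Finset.mem_range] at hmem; omega)]
      intro j hj
      have hjne : j ≠ n - 1 := fun h => hmem (h ▸ hj)
      have : L * MvPolynomial.homogeneousComponent j Q = 0 := by
        rw [key j, if_neg (by omega)]
      exact (mul_eq_zero.1 this).resolve_left hL0
  rw [hQ]
  exact MvPolynomial.homogeneousComponent_isHomogeneous _ _

lemma quotient_homog_pow {n m : ℕ} {L P Q : MvPolynomial (Fin 2) k} (hL : L.IsHomogeneous 1)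
    (hL0 : L ≠ 0) (hP : P.IsHomogeneous n) (h0 : P ≠ 0) (hdvd : L ^ m * Q = P) :
    m ≤ n ∧ Q.IsHomogeneous (n - m) := by
  induction m generalizing n P with
  | zero =>
      rw [pow_zero, one_mul] at hdvd
      exact ⟨Nat.zero_le _, by rwa [Nat.sub_zero, hdvd]⟩
  | succ m ih =>
      have hfac : L * (L ^ m * Q) = P := by rw [← hdvd]; ring
      have h1 := quotient_homog hL hL0 (by rwa [hfac]) (by rwa [hfac])
      have h2 := ih (P := L ^ m * Q) h1.2 (by intro h; apply h0; rw [← hfac, h, mul_zero]) rfl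
      exact ⟨by omega, by
        have := h2.2
        rwa [show n - 1 - m = n - (m + 1) by omega] at this⟩


lemma ell_pow_dvd_iff {n m : ℕ} {P : MvPolynomial (Fin 2) k} (hP : P.IsHomogeneous n) (c : k) :
    ell c ^ m ∣ P ↔ (X - C c) ^ m ∣ phi1 P := by
  induction m generalizing n P with
  | zero => simp
  | succ m ih =>
    constructor
    · intro h
      have h2 := map_dvd phi1 h
      rwa [map_pow, phi1_ell] at h2
    · intro h
      by_cases h0 : P = 0
      · rw [h0]; exact dvd_zero _
      have hroot : MvPolynomial.eval ![c, 1] P = 0 := by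
        rw [← eval_phi1]
        obtain ⟨q, hq⟩ := dvd_trans (dvd_pow_self (X - C c) (Nat.succ_ne_zero m)) h
        rw [hq]; simp
      obtain ⟨Q, hQ⟩ := ell_dvd_of_root hP hroot
      have hfac := quotient_homog (ell_homog c) (ell_ne_zero c) (hQ ▸ hP) (hQ ▸ h0)
      have hphi : phi1 P = (X - C c) * phi1 Q := by rw [hQ, map_mul, phi1_ell]
      have hcan : (X - C c) ^ m ∣ phi1 Q := by
        rw [hphi, pow_succ'] at h
        exact (mul_dvd_mul_iff_left (X_sub_C_ne_zero c)).1 h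
      rw [hQ, pow_succ']
      exact mul_dvd_mul_left _ ((ih hfac.2).2 hcan)

lemma phi1_monomial (d : Fin 2 →₀ ℕ) (r : k) :
    phi1 (MvPolynomial.monomial d r) = C r * X ^ (d 0) := by
  rw [phi1, MvPolynomial.aeval_monomial,
    Finsupp.prod_fintype _ _ (fun i => pow_zero _), Fin.prod_univ_two]
  simp

lemma coeff_phi1 {n : ℕ} {P : MvPolynomial (Fin 2) k} (hP : P.IsHomogeneous n) :
    (phi1 P).coeff n = MvPolynomial.eval ![(1 : k), 0] P := by
  conv_lhs => rw [P.as_sum]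
  conv_rhs => rw [P.as_sum]
  rw [map_sum, Polynomial.finset_sum_coeff, map_sum]
  refine Finset.sum_congr rfl fun d hd => ?_
  have hdeg := degree_sum_eq hP (MvPolynomial.mem_support_iff.1 hd)
  rw [phi1_monomial, MvPolynomial.eval_monomial,
    Finsupp.prod_fintype _ _ (fun i => pow_zero _), Fin.prod_univ_two]
  simp only [Matrix.cons_val_zero, Matrix.cons_val_one, Matrix.head_cons, one_pow, one_mul]
  rw [Polynomial.coeff_C_mul, Polynomial.coeff_X_pow]
  by_cases h1 : d 1 = 0
  · have h0 : n = d 0 := by omega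
    simp [h0, h1]
  · have h0 : n ≠ d 0 := by omega
    simp [h0, zero_pow h1]

lemma natDegree_phi1_le {n : ℕ} {P : MvPolynomial (Fin 2) k} (hP : P.IsHomogeneous n) :
    (phi1 P).natDegree ≤ n := by
  conv_lhs => rw [P.as_sum, map_sum]
  refine (Polynomial.natDegree_sum_le _ _).trans ?_
  rw [Finset.fold_max_le]
  refine ⟨Nat.zero_le _, fun d hd => ?_⟩
  have hdeg := degree_sum_eq hP (MvPolynomial.mem_support_iff.1 hd)
  calc (Polynomial.natDegree ∘ fun v => phi1 (MvPolynomial.monomial v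
          (MvPolynomial.coeff v P))) d
      = (C (MvPolynomial.coeff d P) * X ^ (d 0)).natDegree := by
        simp only [Function.comp_apply, phi1_monomial]
    _ ≤ (X ^ (d 0) : k[X]).natDegree := natDegree_C_mul_le _ _
    _ ≤ n := by rw [natDegree_X_pow]; omega

def sub1 {k : Type*} [Field k] : MvPolynomial (Fin 2) k →ₐ[k] MvPolynomial (Fin 2) k :=
  MvPolynomial.aeval ![MvPolynomial.X 0, 0]

lemma X1_dvd_sub_sub1 (P : MvPolynomial (Fin 2) k) :
    (MvPolynomial.X 1 : MvPolynomial (Fin 2) k) ∣ P - sub1 P := by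
  induction P using MvPolynomial.induction_on with
  | C a => simp [sub1]
  | add p q hp hq =>
      have := dvd_add hp hq
      rw [map_add]
      convert this using 1
      ring
  | mul_X p i hp =>
      rw [map_mul]
      fin_cases i
      · simp only [Fin.isValue, Fin.zero_eta, sub1, MvPolynomial.aeval_eq_bind₁,
          MvPolynomial.bind₁_X_right, Matrix.cons_val_zero]
        have := hp.mul_right (MvPolynomial.X 0)
        rwa [sub_mul] at this
      · simp [sub1]

lemma X1_dvd_iff (P : MvPolynomial (Fin 2) k) :
    (MvPolynomial.X 1 : MvPolynomial (Fin 2) k) ∣ P ↔ sub1 P = 0 := by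
  constructor
  · rintro ⟨q, rfl⟩
    rw [map_mul]
    simp [sub1]
  · intro h
    have := X1_dvd_sub_sub1 P
    rwa [h, sub_zero] at this

lemma X1_dvd_iff_eval10 {j : ℕ} {Q : MvPolynomial (Fin 2) k} (hQ : Q.IsHomogeneous j) :
    (MvPolynomial.X 1 : MvPolynomial (Fin 2) k) ∣ Q ↔ MvPolynomial.eval ![(1 : k), 0] Q = 0 := by
  rw [X1_dvd_iff]
  have h3 := aeval_CW hQ 1 0 (MvPolynomial.X 0)
  have hv : ![MvPolynomial.C (1 : k) * MvPolynomial.X 0,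
      MvPolynomial.C (0 : k) * MvPolynomial.X 0] = ![MvPolynomial.X 0, (0 : MvPolynomial (Fin 2) k)] := by
    funext i; fin_cases i <;> simp
  rw [hv] at h3
  rw [show (sub1 Q : MvPolynomial (Fin 2) k)
      = MvPolynomial.aeval ![MvPolynomial.X 0, (0 : MvPolynomial (Fin 2) k)] Q from rfl, h3]
  constructor
  · intro h
    have := congrArg phi1 h
    rw [map_mul, map_zero, map_pow] at this
    have hx : phi1 (MvPolynomial.X 0) = (X : k[X]) := by simp [phi1]
    rw [hx] at this
    have hC : phi1 (MvPolynomial.C (MvPolynomial.eval ![(1:k),0] Q)) = C (MvPolynomial.eval ![(1:k),0] Q) := by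
      simp [phi1]
    rw [hC] at this
    have := mul_eq_zero.1 this
    rcases this with h' | h'
    · exact (C_eq_zero).1 h'
    · exact absurd h' (pow_ne_zero _ X_ne_zero)
  · intro h
    rw [h, map_zero, zero_mul]

lemma X1_pow_sub_natDegree_dvd {j : ℕ} {Q : MvPolynomial (Fin 2) k} (hQ : Q.IsHomogeneous j) :
    (MvPolynomial.X 1 : MvPolynomial (Fin 2) k) ^ (j - (phi1 Q).natDegree) ∣ Q := by
  induction j using Nat.strong_induction_on generalizing Q with
  | _ j ih =>
  by_cases h0 : Q = 0
  · rw [h0]; exact dvd_zero _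
  by_cases hdeg : j ≤ (phi1 Q).natDegree
  · rw [Nat.sub_eq_zero_of_le hdeg, pow_zero]; exact one_dvd _
  push_neg at hdeg
  have heval : MvPolynomial.eval ![(1 : k), 0] Q = 0 := by
    rw [← coeff_phi1 hQ]
    exact Polynomial.coeff_eq_zero_of_natDegree_lt hdeg
  obtain ⟨Q', hQ'⟩ := (X1_dvd_iff_eval10 hQ).2 heval
  have hj : 1 ≤ j ∧ Q'.IsHomogeneous (j - 1) :=
    quotient_homog (MvPolynomial.isHomogeneous_X _ _) (MvPolynomial.X_ne_zero _)
      (hQ' ▸ hQ) (hQ' ▸ h0)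
  have hphi : phi1 Q = phi1 Q' := by
    rw [hQ', map_mul]
    simp [phi1]
  have hind := ih (j - 1) (by omega) hj.2
  rw [← hphi] at hind
  have harith : (MvPolynomial.X 1 : MvPolynomial (Fin 2) k) ^ (j - (phi1 Q).natDegree)
      = MvPolynomial.X 1 * MvPolynomial.X 1 ^ (j - 1 - (phi1 Q).natDegree) := by
    rw [← pow_succ']
    congr 1
    omega
  rw [harith]
  conv_rhs => rw [hQ']
  exact mul_dvd_mul_left _ hind

lemma natDegree_le_of_X1_pow_dvd {n m : ℕ} {P : MvPolynomial (Fin 2) k}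
    (hP : P.IsHomogeneous n) (h0 : P ≠ 0)
    (h : (MvPolynomial.X 1 : MvPolynomial (Fin 2) k) ^ m ∣ P) :
    m ≤ n ∧ (phi1 P).natDegree ≤ n - m := by
  obtain ⟨Q, hQ⟩ := h
  have hq := quotient_homog_pow (MvPolynomial.isHomogeneous_X _ _) (MvPolynomial.X_ne_zero _)
    hP h0 hQ.symm
  have hphi : phi1 P = phi1 Q := by
    rw [hQ, map_mul, map_pow]
    simp [phi1]
  exact ⟨hq.1, hphi ▸ natDegree_phi1_le hq.2⟩

lemma lin_decomp {L : MvPolynomial (Fin 2) k} (hL : L.IsHomogeneous 1) :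
    ∃ u v : k, L = MvPolynomial.C u * MvPolynomial.X 0 + MvPolynomial.C v * MvPolynomial.X 1
      ∧ (L ≠ 0 → ¬(u = 0 ∧ v = 0)) := by
  classical
  refine ⟨MvPolynomial.coeff (Finsupp.single 0 1) L, MvPolynomial.coeff (Finsupp.single 1 1) L,
    ?_, ?_⟩
  · apply MvPolynomial.ext
    intro d
    rw [MvPolynomial.coeff_add]
    rw [show (MvPolynomial.C (MvPolynomial.coeff (Finsupp.single 0 1) L)
        * MvPolynomial.X 0 : MvPolynomial (Fin 2) k)
      = MvPolynomial.monomial (Finsupp.single 0 1) (MvPolynomial.coeff (Finsupp.single 0 1) L) by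
        rw [← MvPolynomial.C_mul_X_pow_eq_monomial, pow_one]]
    rw [show (MvPolynomial.C (MvPolynomial.coeff (Finsupp.single 1 1) L)
        * MvPolynomial.X 1 : MvPolynomial (Fin 2) k)
      = MvPolynomial.monomial (Finsupp.single 1 1) (MvPolynomial.coeff (Finsupp.single 1 1) L) by
        rw [← MvPolynomial.C_mul_X_pow_eq_monomial, pow_one]]
    rw [MvPolynomial.coeff_monomial, MvPolynomial.coeff_monomial]
    by_cases hd : d 0 + d 1 = 1
    · have : d = Finsupp.single 0 1 ∨ d = Finsupp.single 1 1 := by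
        rcases Nat.eq_zero_or_pos (d 0) with h0 | h0
        · right
          ext i
          fin_cases i <;> simp [Finsupp.single_apply] <;> omega
        · left
          ext i
          fin_cases i <;> simp [Finsupp.single_apply] <;> omega
      have hne : (Finsupp.single (0 : Fin 2) 1) ≠ Finsupp.single (1 : Fin 2) 1 := by
        intro h
        have := DFunLike.congr_fun h 0
        simp [Finsupp.single_apply] at this
      rcases this with rfl | rfl
      · rw [if_pos rfl, if_neg (Ne.symm hne), add_zero]
      · rw [if_neg hne, if_pos rfl, zero_add]
    · have hc : MvPolynomial.coeff d L = 0 := by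
        by_contra hc
        exact hd (degree_sum_eq hL hc)
      have h0 : d ≠ Finsupp.single 0 1 := by
        intro h; rw [h] at hd; simp [Finsupp.single_apply] at hd
      have h1 : d ≠ Finsupp.single 1 1 := by
        intro h; rw [h] at hd; simp [Finsupp.single_apply] at hd
      rw [hc, if_neg (Ne.symm h0), if_neg (Ne.symm h1), add_zero]
  · intro hL0 h
    apply hL0
    apply MvPolynomial.ext
    intro d
    by_cases hd : d 0 + d 1 = 1
    · have hcases : d = Finsupp.single 0 1 ∨ d = Finsupp.single 1 1 := by
        rcases Nat.eq_zero_or_pos (d 0) with h0 | h0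
        · right
          ext i
          fin_cases i <;> simp [Finsupp.single_apply] <;> omega
        · left
          ext i
          fin_cases i <;> simp [Finsupp.single_apply] <;> omega
      rcases hcases with rfl | rfl
      · rw [h.1, MvPolynomial.coeff_zero]
      · rw [h.2, MvPolynomial.coeff_zero]
    · rw [MvPolynomial.coeff_zero]
      by_contra hc
      exact hd (degree_sum_eq hL hc)


section Univariate

variable {k : Type*} [Field k] (hk2 : (2 : k) ≠ 0) (hk3 : (3 : k) ≠ 0) (F G : k[X])
variable (hsing : ∀ x t : k, ¬ (x ^ 3 + F.eval t * x + G.eval t = 0 ∧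
    3 * x ^ 2 + F.eval t = 0 ∧
    (derivative F).eval t * x + (derivative G).eval t = 0))

include hk3 in
lemma h27 : (27 : k) ≠ 0 := by
  intro h
  apply hk3
  have h3 : (3 : k) ^ 3 = 27 := by norm_num
  rw [h] at h3
  exact pow_eq_zero_iff (by norm_num) |>.1 h3

include hk2 in
lemma h4 : (4 : k) ≠ 0 := by
  intro h
  apply hk2
  have h2 : (2 : k) ^ 2 = 4 := by norm_num
  rw [h] at h2
  exact pow_eq_zero_iff (by norm_num) |>.1 h2

include hk2 in
lemma h8 : (8 : k) ≠ 0 := by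
  intro h
  apply hk2
  have h2 : (2 : k) ^ 3 = 8 := by norm_num
  rw [h] at h2
  exact pow_eq_zero_iff (by norm_num) |>.1 h2

include hk2 hk3 in
lemma h54 : (54 : k) ≠ 0 := by
  intro h
  have h' : (2 : k) * 27 = 54 := by norm_num
  rw [h] at h'
  rcases mul_eq_zero.1 h' with h'' | h''
  · exact hk2 h''
  · exact h27 hk3 h''

lemma eval_derivD (a : k) :
    (derivative (4 * F ^ 3 + 27 * G ^ 2)).eval a
      = 12 * (F.eval a) ^ 2 * (derivative F).eval a
        + 54 * (G.eval a) * (derivative G).eval a := by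
  have h : derivative (4 * F ^ 3 + 27 * G ^ 2)
      = 12 * F ^ 2 * derivative F + 54 * G * derivative G := by
    simp only [derivative_add, derivative_mul, derivative_pow, derivative_ofNat, zero_mul,
      zero_add, Nat.cast_ofNat, map_ofNat]
    ring
  rw [h]
  simp

include hsing hk2 hk3 in
lemma sing_of_double {a : k} (hD : (4 * F ^ 3 + 27 * G ^ 2).eval a = 0)
    (hD' : (derivative (4 * F ^ 3 + 27 * G ^ 2)).eval a = 0)
    (hF : F.eval a ≠ 0) : False := by
  set p := F.eval a with hp
  set q := G.eval a with hqdef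
  set p' := (derivative F).eval a with hp'
  set q' := (derivative G).eval a with hq''
  have h1 : 4 * p ^ 3 + 27 * q ^ 2 = 0 := by simpa using hD
  have h2 : 12 * p ^ 2 * p' + 54 * q * q' = 0 := by
    rw [eval_derivD] at hD'
    exact hD'
  have hq : q ≠ 0 := by
    intro h
    rw [h] at h1
    have h' : (4 : k) * p ^ 3 = 0 := by linear_combination h1
    rcases mul_eq_zero.1 h' with h'' | h''
    · exact h4 hk2 h''
    · exact hF (pow_eq_zero_iff (by norm_num) |>.1 h'')
  have hp2 : 2 * p ≠ 0 := mul_ne_zero hk2 hF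
  set x0 : k := -3 * q / (2 * p) with hx0
  have hpx : 2 * p * x0 = -3 * q := by
    rw [hx0]
    field_simp
  have hkey : 2 * p * q' - 3 * q * p' = 0 := by
    have h54' : (54 * q) * (2 * p * q' - 3 * q * p') = 0 := by
      linear_combination 2 * p * h2 - 6 * p' * h1
    rcases mul_eq_zero.1 h54' with h' | h'
    · rcases mul_eq_zero.1 h' with h'' | h''
      · exact absurd h'' (h54 hk2 hk3)
      · exact absurd h'' hq
    · exact h'
  apply hsing x0 a
  refine ⟨?_, ?_, ?_⟩
  · have hcube : (2 * p * x0) ^ 3 = -27 * q ^ 3 := by rw [hpx]; ring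
    have h' : (8 * p ^ 3) * (x0 ^ 3 + p * x0 + q) = 0 := by
      linear_combination hcube + (4 * p ^ 3) * hpx - q * h1
    rcases mul_eq_zero.1 h' with h'' | h''
    · rcases mul_eq_zero.1 h'' with h3 | h3
      · exact absurd h3 (h8 hk2)
      · exact absurd (pow_eq_zero_iff (by norm_num) |>.1 h3) hF
    · exact h''
  · have hsq : (2 * p * x0) ^ 2 = 9 * q ^ 2 := by rw [hpx]; ring
    have h' : (4 * p ^ 2) * (3 * x0 ^ 2 + p) = 0 := by
      linear_combination 3 * hsq + h1
    rcases mul_eq_zero.1 h' with h'' | h''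
    · rcases mul_eq_zero.1 h'' with h3 | h3
      · exact absurd h3 (h4 hk2)
      · exact absurd (pow_eq_zero_iff (by norm_num) |>.1 h3) hF
    · exact h''
  · have h' : (2 * p) * (p' * x0 + q') = 0 := by
      linear_combination p' * hpx + hkey
    rcases mul_eq_zero.1 h' with h'' | h''
    · exact absurd h'' hp2
    · exact h''


lemma double_root_vanish {p : k[X]} {a : k} (h : (X - C a) ^ 2 ∣ p) :
    p.eval a = 0 ∧ (derivative p).eval a = 0 := by
  obtain ⟨W, rfl⟩ := h
  constructor
  · simp
  · simp [derivative_mul, derivative_pow]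

include hsing hk2 hk3 in
lemma deriv_G_ne_zero {a : k} (hF : F.eval a = 0)
    (hD : (4 * F ^ 3 + 27 * G ^ 2).eval a = 0) :
    G.eval a = 0 ∧ (derivative G).eval a ≠ 0 := by
  have hG : G.eval a = 0 := by
    have h1 : (27 : k) * (G.eval a) ^ 2 = 0 := by
      have := hD
      simp only [eval_add, eval_mul, eval_pow, eval_ofNat] at this
      rw [hF] at this
      linear_combination this
    rcases mul_eq_zero.1 h1 with h' | h'
    · exact absurd h' (h27 hk3)
    · exact pow_eq_zero_iff (by norm_num) |>.1 h'
  refine ⟨hG, fun h => ?_⟩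
  exact hsing 0 a ⟨by rw [hF, hG]; ring, by rw [hF]; ring, by rw [h]; ring⟩

include hsing hk2 hk3 in
lemma rm_eq_two {a : k} (hF : F.eval a = 0)
    (hD : (4 * F ^ 3 + 27 * G ^ 2).eval a = 0) :
    rootMultiplicity a (4 * F ^ 3 + 27 * G ^ 2) = 2 := by
  obtain ⟨hG, hG'⟩ := deriv_G_ne_zero hk2 hk3 F G hsing hF hD
  obtain ⟨F1, hF1⟩ := (dvd_iff_isRoot (p := F)).2 hF
  obtain ⟨G1, hG1⟩ := (dvd_iff_isRoot (p := G)).2 hG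
  have hG1a : G1.eval a = (derivative G).eval a := by
    rw [hG1]
    simp [derivative_mul]
  have hDfac : 4 * F ^ 3 + 27 * G ^ 2
      = (X - C a) ^ 2 * (4 * (X - C a) * F1 ^ 3 + 27 * G1 ^ 2) := by
    rw [hF1, hG1]
    ring
  have hUa : (4 * (X - C a) * F1 ^ 3 + 27 * G1 ^ 2).eval a = 27 * (G1.eval a) ^ 2 := by
    simp
  have hU0 : (4 * (X - C a) * F1 ^ 3 + 27 * G1 ^ 2).eval a ≠ 0 := by
    rw [hUa, hG1a]
    exact mul_ne_zero (h27 hk3) (pow_ne_zero _ hG')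
  have hUne : (4 * (X - C a) * F1 ^ 3 + 27 * G1 ^ 2) ≠ 0 := by
    intro h
    rw [h] at hU0
    simp at hU0
  have hD0 : (4 * F ^ 3 + 27 * G ^ 2) ≠ 0 := by
    rw [hDfac]
    exact mul_ne_zero (pow_ne_zero _ (X_sub_C_ne_zero a)) hUne
  have hge : 2 ≤ rootMultiplicity a (4 * F ^ 3 + 27 * G ^ 2) := by
    rw [le_rootMultiplicity_iff hD0]
    exact ⟨_, hDfac⟩
  have hle : rootMultiplicity a (4 * F ^ 3 + 27 * G ^ 2) ≤ 2 := by
    rw [rootMultiplicity_le_iff hD0]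
    rintro ⟨W, hW⟩
    rw [hDfac] at hW
    have hcan : 4 * (X - C a) * F1 ^ 3 + 27 * G1 ^ 2 = (X - C a) * W := by
      have h2 : (X - C a) ^ 2 * (4 * (X - C a) * F1 ^ 3 + 27 * G1 ^ 2)
          = (X - C a) ^ 2 * ((X - C a) * W) := by rw [hW]; ring
      exact mul_left_cancel₀ (pow_ne_zero _ (X_sub_C_ne_zero a)) h2
    apply hU0
    rw [hcan]
    simp
  omega

include hsing hk2 hk3 in
lemma D_ne_zero [IsAlgClosed k] : (4 * F ^ 3 + 27 * G ^ 2) ≠ 0 := by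
  intro hD0
  by_cases hF : F = 0
  · have hGsq : (27 : k[X]) * G ^ 2 = 0 := by
      rw [hF] at hD0
      linear_combination hD0
    have hG : G = 0 := by
      rcases mul_eq_zero.1 hGsq with h' | h'
      · exfalso
        apply h27 hk3
        have := congrArg (fun p => Polynomial.eval 0 p) h'
        simpa using this
      · exact pow_eq_zero_iff (by norm_num) |>.1 h'
    exact hsing 0 0 ⟨by rw [hF, hG]; simp, by rw [hF]; simp, by rw [hG]; simp⟩
  · obtain ⟨a, ha⟩ := F.exists_eval_ne_zero_of_natDegree_lt_card hF
      (lt_of_lt_of_le (Cardinal.nat_lt_aleph0 _) (Cardinal.infinite_iff.mp inferInstance))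
    exact sing_of_double hk2 hk3 F G hsing (by rw [hD0]; simp) (by rw [hD0]; simp) ha

include hsing hk2 hk3 in
lemma rm_cases (hD0 : (4 * F ^ 3 + 27 * G ^ 2) ≠ 0) {a : k}
    (hroot : (4 * F ^ 3 + 27 * G ^ 2).eval a = 0) :
    (F.eval a ≠ 0 ∧ rootMultiplicity a (4 * F ^ 3 + 27 * G ^ 2) = 1) ∨
    (F.eval a = 0 ∧ rootMultiplicity a (4 * F ^ 3 + 27 * G ^ 2) = 2) := by
  by_cases hF : F.eval a = 0
  · exact Or.inr ⟨hF, rm_eq_two hk2 hk3 F G hsing hF hroot⟩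
  · left
    refine ⟨hF, ?_⟩
    have hge : 1 ≤ rootMultiplicity a (4 * F ^ 3 + 27 * G ^ 2) :=
      (rootMultiplicity_pos hD0).2 hroot
    have hle : rootMultiplicity a (4 * F ^ 3 + 27 * G ^ 2) ≤ 1 := by
      rw [rootMultiplicity_le_iff hD0]
      intro h
      obtain ⟨hv, hv'⟩ := double_root_vanish h
      exact sing_of_double hk2 hk3 F G hsing hv hv' hF
    omega

include hsing hk2 hk3 in
lemma rm_le_two (hD0 : (4 * F ^ 3 + 27 * G ^ 2) ≠ 0) (a : k) :
    rootMultiplicity a (4 * F ^ 3 + 27 * G ^ 2) ≤ 2 := by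
  by_cases hroot : (4 * F ^ 3 + 27 * G ^ 2).eval a = 0
  · rcases rm_cases hk2 hk3 F G hsing hD0 hroot with h | h
    · omega
    · omega
  · rw [rootMultiplicity_eq_zero hroot]
    omega

end Univariate
end DP1

namespace DP1

def FP {k : Type*} [Field k] (f : Fin 5 → k) : k[X] := ∑ i : Fin 5, C (f i) * X ^ (i : ℕ)
def GP {k : Type*} [Field k] (g : Fin 7 → k) : k[X] := ∑ j : Fin 7, C (g j) * X ^ (j : ℕ)
def frev {k : Type*} [Field k] (f : Fin 5 → k) : Fin 5 → k := ![f 4, f 3, f 2, f 1, f 0]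
def grev {k : Type*} [Field k] (g : Fin 7 → k) : Fin 7 → k := ![g 6, g 5, g 4, g 3, g 2, g 1, g 0]
def DD {k : Type*} [Field k] (f : Fin 5 → k) (g : Fin 7 → k) : k[X] :=
  4 * FP f ^ 3 + 27 * GP g ^ 2
def Dm {k : Type*} [Field k] (f : Fin 5 → k) (g : Fin 7 → k) : MvPolynomial (Fin 2) k :=
  4 * fpoly f ^ 3 + 27 * gpoly g ^ 2

variable {k : Type*} [Field k] (f : Fin 5 → k) (g : Fin 7 → k)

lemma eval_chart1 (x y t : k) : MvPolynomial.eval ![x, y, t] (chart1 f g)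
    = -y ^ 2 + x ^ 3 + (FP f).eval t * x + (GP g).eval t := by
  simp [chart1, FP, GP, Fin.sum_univ_five, Fin.sum_univ_seven]

lemma eval_chart1_pd0 (x y t : k) :
    MvPolynomial.eval ![x, y, t] (MvPolynomial.pderiv 0 (chart1 f g))
    = 3 * x ^ 2 + (FP f).eval t := by
  simp [chart1, FP, GP, Fin.sum_univ_five, Fin.sum_univ_seven, MvPolynomial.pderiv_X,
    Derivation.leibniz, Derivation.leibniz_pow]

lemma eval_chart1_pd1 (x y t : k) :
    MvPolynomial.eval ![x, y, t] (MvPolynomial.pderiv 1 (chart1 f g)) = -(2 * y) := by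
  simp [chart1, FP, GP, Fin.sum_univ_five, Fin.sum_univ_seven, MvPolynomial.pderiv_X,
    Derivation.leibniz, Derivation.leibniz_pow]

lemma eval_chart1_pd2 (x y t : k) :
    MvPolynomial.eval ![x, y, t] (MvPolynomial.pderiv 2 (chart1 f g))
    = (derivative (FP f)).eval t * x + (derivative (GP g)).eval t := by
  simp [chart1, FP, GP, Fin.sum_univ_five, Fin.sum_univ_seven, MvPolynomial.pderiv_X,
    Derivation.leibniz, Derivation.leibniz_pow]
  ring

lemma chart2_eq : chart2 f g = chart1 (frev f) (grev g) := by
  simp only [chart1, chart2, frev, grev, Fin.sum_univ_five, Fin.sum_univ_seven,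
    show ((3:Fin 5):ℕ) = 3 from rfl, show ((4:Fin 5):ℕ) = 4 from rfl,
    show ((3:Fin 7):ℕ) = 3 from rfl, show ((4:Fin 7):ℕ) = 4 from rfl,
    show ((5:Fin 7):ℕ) = 5 from rfl, show ((6:Fin 7):ℕ) = 6 from rfl,
    show (![f 4, f 3, f 2, f 1, f 0] : Fin 5 → k) 0 = f 4 from rfl,
    show (![f 4, f 3, f 2, f 1, f 0] : Fin 5 → k) 1 = f 3 from rfl,
    show (![f 4, f 3, f 2, f 1, f 0] : Fin 5 → k) 2 = f 2 from rfl,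
    show (![f 4, f 3, f 2, f 1, f 0] : Fin 5 → k) 3 = f 1 from rfl,
    show (![f 4, f 3, f 2, f 1, f 0] : Fin 5 → k) 4 = f 0 from rfl,
    show (![g 6, g 5, g 4, g 3, g 2, g 1, g 0] : Fin 7 → k) 0 = g 6 from rfl,
    show (![g 6, g 5, g 4, g 3, g 2, g 1, g 0] : Fin 7 → k) 1 = g 5 from rfl,
    show (![g 6, g 5, g 4, g 3, g 2, g 1, g 0] : Fin 7 → k) 2 = g 4 from rfl,
    show (![g 6, g 5, g 4, g 3, g 2, g 1, g 0] : Fin 7 → k) 3 = g 3 from rfl,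
    show (![g 6, g 5, g 4, g 3, g 2, g 1, g 0] : Fin 7 → k) 4 = g 2 from rfl,
    show (![g 6, g 5, g 4, g 3, g 2, g 1, g 0] : Fin 7 → k) 5 = g 1 from rfl,
    show (![g 6, g 5, g 4, g 3, g 2, g 1, g 0] : Fin 7 → k) 6 = g 0 from rfl]
  norm_num
  ring

lemma aeval_algebraMap_pt {K : Type*} [Field K] [Algebra k K] (pt : Fin 3 → k)
    (P : MvPolynomial (Fin 3) k) :
    MvPolynomial.aeval (fun i => algebraMap k K (pt i)) P
      = algebraMap k K (MvPolynomial.eval pt P) := by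
  rw [MvPolynomial.aeval_def,
    show (MvPolynomial.eval pt P) = MvPolynomial.eval₂ (RingHom.id k) pt P from rfl,
    MvPolynomial.eval₂_comp_left (algebraMap k K) (RingHom.id k) pt P]
  rfl

lemma hsing_of_chart
    (h : ∀ v : Fin 3 → AlgebraicClosure k,
      ¬ (MvPolynomial.aeval v (chart1 f g) = 0 ∧
        ∀ s : Fin 3, MvPolynomial.aeval v (MvPolynomial.pderiv s (chart1 f g)) = 0)) :
    ∀ x t : k, ¬ (x ^ 3 + (FP f).eval t * x + (GP g).eval t = 0 ∧
      3 * x ^ 2 + (FP f).eval t = 0 ∧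
      (derivative (FP f)).eval t * x + (derivative (GP g)).eval t = 0) := by
  intro x t ⟨e1, e2, e3⟩
  apply h (fun i => algebraMap k (AlgebraicClosure k) (![x, 0, t] i))
  constructor
  · rw [aeval_algebraMap_pt, eval_chart1]
    rw [show -(0:k) ^ 2 + x ^ 3 + (FP f).eval t * x + (GP g).eval t = 0 by
      linear_combination e1]
    exact map_zero _
  · intro s
    rw [aeval_algebraMap_pt]
    fin_cases s
    · show algebraMap k (AlgebraicClosure k)
          (MvPolynomial.eval ![x, 0, t] (MvPolynomial.pderiv 0 (chart1 f g))) = 0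
      rw [eval_chart1_pd0, e2, map_zero]
    · show algebraMap k (AlgebraicClosure k)
          (MvPolynomial.eval ![x, 0, t] (MvPolynomial.pderiv 1 (chart1 f g))) = 0
      rw [eval_chart1_pd1]
      norm_num
    · show algebraMap k (AlgebraicClosure k)
          (MvPolynomial.eval ![x, 0, t] (MvPolynomial.pderiv 2 (chart1 f g))) = 0
      rw [eval_chart1_pd2, e3, map_zero]

lemma hsing1 (hS : SmoothSextic k f g) :
    ∀ x t : k, ¬ (x ^ 3 + (FP f).eval t * x + (GP g).eval t = 0 ∧
      3 * x ^ 2 + (FP f).eval t = 0 ∧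
      (derivative (FP f)).eval t * x + (derivative (GP g)).eval t = 0) :=
  hsing_of_chart f g hS.1

lemma hsing2 (hS : SmoothSextic k f g) :
    ∀ x t : k, ¬ (x ^ 3 + (FP (frev f)).eval t * x + (GP (grev g)).eval t = 0 ∧
      3 * x ^ 2 + (FP (frev f)).eval t = 0 ∧
      (derivative (FP (frev f))).eval t * x + (derivative (GP (grev g))).eval t = 0) := by
  apply hsing_of_chart
  rw [← chart2_eq]
  exact hS.2

lemma fpoly_homog : (fpoly f).IsHomogeneous 4 := by
  apply MvPolynomial.IsHomogeneous.sum
  intro i _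
  have h1 : ((MvPolynomial.C (f i) : MvPolynomial (Fin 2) k) * (MvPolynomial.X 0) ^ (i : ℕ)
      * (MvPolynomial.X 1) ^ (4 - (i : ℕ))).IsHomogeneous ((0 + (i : ℕ)) + (4 - (i : ℕ))) :=
    ((MvPolynomial.isHomogeneous_C _ _).mul (MvPolynomial.isHomogeneous_X_pow _ _)).mul
      (MvPolynomial.isHomogeneous_X_pow _ _)
  have h2 : ((0 + (i : ℕ)) + (4 - (i : ℕ))) = 4 := by have := i.is_le; omega
  rwa [h2] at h1

lemma gpoly_homog : (gpoly g).IsHomogeneous 6 := by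
  apply MvPolynomial.IsHomogeneous.sum
  intro j _
  have h1 : ((MvPolynomial.C (g j) : MvPolynomial (Fin 2) k) * (MvPolynomial.X 0) ^ (j : ℕ)
      * (MvPolynomial.X 1) ^ (6 - (j : ℕ))).IsHomogeneous ((0 + (j : ℕ)) + (6 - (j : ℕ))) :=
    ((MvPolynomial.isHomogeneous_C _ _).mul (MvPolynomial.isHomogeneous_X_pow _ _)).mul
      (MvPolynomial.isHomogeneous_X_pow _ _)
  have h2 : ((0 + (j : ℕ)) + (6 - (j : ℕ))) = 6 := by have := j.is_le; omega
  rwa [h2] at h1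

lemma Dm_homog : (Dm f g).IsHomogeneous 12 := by
  rw [Dm, show ((4 : MvPolynomial (Fin 2) k)) = MvPolynomial.C 4 from (map_ofNat _ 4).symm,
    show ((27 : MvPolynomial (Fin 2) k)) = MvPolynomial.C 27 from (map_ofNat _ 27).symm]
  apply MvPolynomial.IsHomogeneous.add
  · exact ((fpoly_homog f).pow 3).C_mul 4
  · exact ((gpoly_homog g).pow 2).C_mul 27

lemma phi1_fpoly : phi1 (fpoly f) = FP f := by
  simp [fpoly, phi1, FP, Fin.sum_univ_five]

lemma phi1_gpoly : phi1 (gpoly g) = GP g := by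
  simp [gpoly, phi1, GP, Fin.sum_univ_seven]

lemma phi1_Dm : phi1 (Dm f g) = DD f g := by
  rw [Dm, DD, map_add, map_mul, map_mul, map_pow, map_pow, map_ofNat, map_ofNat,
    phi1_fpoly, phi1_gpoly]


lemma sigma_sigma (P : MvPolynomial (Fin 2) k) :
    MvPolynomial.rename (Equiv.swap (0:Fin 2) 1) (MvPolynomial.rename (Equiv.swap (0:Fin 2) 1) P)
      = P := by
  rw [MvPolynomial.rename_rename]
  have h : (⇑(Equiv.swap (0:Fin 2) 1) ∘ ⇑(Equiv.swap (0:Fin 2) 1)) = id :=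
    funext fun x => Equiv.swap_apply_self _ _ _
  rw [h, MvPolynomial.rename_id, AlgHom.id_apply]

lemma dvd_sigma_iff (P Q : MvPolynomial (Fin 2) k) :
    P ∣ Q ↔ MvPolynomial.rename (Equiv.swap (0:Fin 2) 1) P
      ∣ MvPolynomial.rename (Equiv.swap (0:Fin 2) 1) Q := by
  constructor
  · exact fun h => map_dvd _ h
  · intro h
    have h2 := map_dvd (MvPolynomial.rename (Equiv.swap (0:Fin 2) 1)) h
    rwa [sigma_sigma, sigma_sigma] at h2

lemma sigma_fpoly : MvPolynomial.rename (Equiv.swap (0:Fin 2) 1) (fpoly f) = fpoly (frev f) := by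
  simp only [fpoly, frev, Fin.sum_univ_five, map_add, map_mul, map_pow,
    MvPolynomial.rename_X, MvPolynomial.rename_C, Equiv.swap_apply_left, Equiv.swap_apply_right,
    show ((3:Fin 5):ℕ) = 3 from rfl, show ((4:Fin 5):ℕ) = 4 from rfl,
    show (![f 4, f 3, f 2, f 1, f 0] : Fin 5 → k) 0 = f 4 from rfl,
    show (![f 4, f 3, f 2, f 1, f 0] : Fin 5 → k) 1 = f 3 from rfl,
    show (![f 4, f 3, f 2, f 1, f 0] : Fin 5 → k) 2 = f 2 from rfl,
    show (![f 4, f 3, f 2, f 1, f 0] : Fin 5 → k) 3 = f 1 from rfl,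
    show (![f 4, f 3, f 2, f 1, f 0] : Fin 5 → k) 4 = f 0 from rfl]
  norm_num
  ring

lemma sigma_gpoly : MvPolynomial.rename (Equiv.swap (0:Fin 2) 1) (gpoly g) = gpoly (grev g) := by
  simp only [gpoly, grev, Fin.sum_univ_seven, map_add, map_mul, map_pow,
    MvPolynomial.rename_X, MvPolynomial.rename_C, Equiv.swap_apply_left, Equiv.swap_apply_right,
    show ((3:Fin 7):ℕ) = 3 from rfl, show ((4:Fin 7):ℕ) = 4 from rfl,
    show ((5:Fin 7):ℕ) = 5 from rfl, show ((6:Fin 7):ℕ) = 6 from rfl,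
    show (![g 6, g 5, g 4, g 3, g 2, g 1, g 0] : Fin 7 → k) 0 = g 6 from rfl,
    show (![g 6, g 5, g 4, g 3, g 2, g 1, g 0] : Fin 7 → k) 1 = g 5 from rfl,
    show (![g 6, g 5, g 4, g 3, g 2, g 1, g 0] : Fin 7 → k) 2 = g 4 from rfl,
    show (![g 6, g 5, g 4, g 3, g 2, g 1, g 0] : Fin 7 → k) 3 = g 3 from rfl,
    show (![g 6, g 5, g 4, g 3, g 2, g 1, g 0] : Fin 7 → k) 4 = g 2 from rfl,
    show (![g 6, g 5, g 4, g 3, g 2, g 1, g 0] : Fin 7 → k) 5 = g 1 from rfl,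
    show (![g 6, g 5, g 4, g 3, g 2, g 1, g 0] : Fin 7 → k) 6 = g 0 from rfl]
  norm_num
  ring

lemma sigma_Dm : MvPolynomial.rename (Equiv.swap (0:Fin 2) 1) (Dm f g)
    = Dm (frev f) (grev g) := by
  rw [Dm, Dm, map_add, map_mul, map_mul, map_pow, map_pow, map_ofNat, map_ofNat,
    sigma_fpoly, sigma_gpoly]

lemma ell_zero_eq : ell (0 : k) = MvPolynomial.X 0 := by
  simp [ell]

lemma ell_dvd_Dm_iff (m : ℕ) (c : k) :
    ell c ^ m ∣ Dm f g ↔ (X - C c) ^ m ∣ DD f g := by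
  rw [ell_pow_dvd_iff (Dm_homog f g), phi1_Dm]

lemma X1_dvd_Dm_iff (m : ℕ) :
    (MvPolynomial.X 1 : MvPolynomial (Fin 2) k) ^ m ∣ Dm f g
      ↔ (X - C (0:k)) ^ m ∣ DD (frev f) (grev g) := by
  rw [dvd_sigma_iff, map_pow, sigma_Dm]
  rw [show MvPolynomial.rename (Equiv.swap (0:Fin 2) 1) (MvPolynomial.X 1)
    = (MvPolynomial.X 0 : MvPolynomial (Fin 2) k) by simp]
  rw [← ell_zero_eq, ell_dvd_Dm_iff]

lemma unit_mul_dvd_iff {u : k} (hu : u ≠ 0) (P Q : MvPolynomial (Fin 2) k) :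
    MvPolynomial.C u * P ∣ Q ↔ P ∣ Q := by
  constructor
  · intro ⟨W, hW⟩
    exact ⟨MvPolynomial.C u * W, by rw [hW]; ring⟩
  · intro ⟨W, hW⟩
    exact ⟨MvPolynomial.C u⁻¹ * W, by
      rw [hW, show MvPolynomial.C u * P * (MvPolynomial.C u⁻¹ * W)
          = (MvPolynomial.C u * MvPolynomial.C u⁻¹) * (P * W) by ring,
        ← map_mul, mul_inv_cancel₀ hu, map_one, one_mul]⟩

lemma unit_mul_pow_dvd_iff {u : k} (hu : u ≠ 0) (P Q : MvPolynomial (Fin 2) k) (m : ℕ) :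
    (MvPolynomial.C u * P) ^ m ∣ Q ↔ P ^ m ∣ Q := by
  rw [mul_pow, ← map_pow]
  exact unit_mul_dvd_iff (pow_ne_zero _ hu) _ _


lemma vec_ne0 (c : k) : (![c, 1] : Fin 2 → k) ≠ 0 := by
  intro h
  have h1 := congrFun h 1
  simp at h1

lemma vec_ne0' : (![1, 0] : Fin 2 → k) ≠ 0 := by
  intro h
  have h1 := congrFun h 0
  simp at h1

def pip {k : Type*} [Field k] (c : k) : Projectivization k (Fin 2 → k) :=
  Projectivization.mk k ![c, 1] (vec_ne0 c)

def infp (k : Type*) [Field k] : Projectivization k (Fin 2 → k) :=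
  Projectivization.mk k ![1, 0] vec_ne0'

lemma pip_inj : Function.Injective (pip (k := k)) := by
  intro c c' h
  rw [pip, pip, Projectivization.mk_eq_mk_iff'] at h
  obtain ⟨a, ha⟩ := h
  have h1 := congrFun ha 1
  have h0 := congrFun ha 0
  simp only [Pi.smul_apply, smul_eq_mul, Matrix.cons_val_one, Matrix.head_cons,
    Matrix.cons_val_zero, mul_one] at h1 h0
  rw [h1, one_mul] at h0
  exact h0.symm

lemma pip_ne_inf (c : k) : pip c ≠ infp k := by
  intro h
  rw [pip, infp, Projectivization.mk_eq_mk_iff'] at h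
  obtain ⟨a, ha⟩ := h
  have h1 := congrFun ha 1
  simp at h1

lemma classify (p : Projectivization k (Fin 2 → k)) : (∃ c, p = pip c) ∨ p = infp k := by
  by_cases h1 : p.rep 1 = 0
  · right
    conv_lhs => rw [← p.mk_rep]
    rw [infp, Projectivization.mk_eq_mk_iff']
    refine ⟨p.rep 0, ?_⟩
    funext i
    fin_cases i
    · simp
    · simp [h1]
  · left
    refine ⟨p.rep 0 / p.rep 1, ?_⟩
    conv_lhs => rw [← p.mk_rep]
    rw [pip, Projectivization.mk_eq_mk_iff']
    refine ⟨p.rep 1, ?_⟩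
    funext i
    fin_cases i
    · simp only [Pi.smul_apply, smul_eq_mul, Fin.zero_eta, Matrix.cons_val_zero]
      field_simp
    · simp [h1]

lemma linForm_pip (c : k) : ∃ u : k, u ≠ 0 ∧
    linForm ((pip c).rep 0) ((pip c).rep 1) = MvPolynomial.C u * ell c := by
  obtain ⟨a, ha⟩ := Projectivization.exists_smul_eq_mk_rep k ![c, 1] (vec_ne0 c)
  refine ⟨a, a.ne_zero, ?_⟩
  have h0 : (pip c).rep 0 = (a : k) * c := by
    rw [pip, ← ha]
    simp [Units.smul_def]
  have h1 : (pip c).rep 1 = (a : k) := by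
    rw [pip, ← ha]
    simp [Units.smul_def]
  rw [h0, h1, linForm, ell, map_mul]
  ring

lemma linForm_inf : ∃ u : k, u ≠ 0 ∧
    linForm ((infp k).rep 0) ((infp k).rep 1)
      = MvPolynomial.C u * MvPolynomial.X 1 := by
  obtain ⟨a, ha⟩ := Projectivization.exists_smul_eq_mk_rep k ![1, 0] (vec_ne0' (k := k))
  refine ⟨-(a : k), neg_ne_zero.2 a.ne_zero, ?_⟩
  have h0 : (infp k).rep 0 = (a : k) := by
    rw [infp, ← ha]
    simp [Units.smul_def]
  have h1 : (infp k).rep 1 = 0 := by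
    rw [infp, ← ha]
    simp [Units.smul_def]
  rw [h0, h1, linForm, map_zero, map_neg]
  ring


section Main

variable {k : Type*} [Field k] [IsAlgClosed k]
variable (hk2 : (2 : k) ≠ 0) (hk3 : (3 : k) ≠ 0) (f : Fin 5 → k) (g : Fin 7 → k)
variable (hS : SmoothSextic k f g)

include hk2 hk3 hS in
lemma DD_ne : DD f g ≠ 0 :=
  D_ne_zero hk2 hk3 (FP f) (GP g) (hsing1 f g hS)

include hk2 hk3 hS in
lemma DDrev_ne : DD (frev f) (grev g) ≠ 0 :=
  D_ne_zero hk2 hk3 (FP (frev f)) (GP (grev g)) (hsing2 f g hS)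

include hk2 hk3 hS in
lemma Dm_ne : Dm f g ≠ 0 := by
  intro h
  exact DD_ne hk2 hk3 f g hS (by rw [← phi1_Dm, h, map_zero])

lemma l_struct (l : MvPolynomial (Fin 2) k) (hl0 : l ≠ 0) (hl : l.IsHomogeneous 1) :
    (∃ u c : k, u ≠ 0 ∧ l = MvPolynomial.C u * ell c) ∨
    (∃ u : k, u ≠ 0 ∧ l = MvPolynomial.C u * MvPolynomial.X 1) := by
  obtain ⟨u, v, hluv, hnz⟩ := lin_decomp hl
  by_cases hu : u = 0
  · right
    refine ⟨v, fun hv => (hnz hl0) ⟨hu, hv⟩, ?_⟩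
    rw [hluv, hu, map_zero, zero_mul, zero_add]
  · left
    refine ⟨u, -v / u, hu, ?_⟩
    rw [hluv, ell]
    have huv : u * (-v / u) = -v := by
      field_simp
    rw [mul_sub, ← mul_assoc, ← map_mul, huv, map_neg]
    ring

include hk2 hk3 hS in
lemma part2 : ∀ l : MvPolynomial (Fin 2) k, l ≠ 0 → l.IsHomogeneous 1 →
    ¬ l ^ 3 ∣ Dm f g := by
  intro l hl0 hl hdvd
  rcases l_struct l hl0 hl with ⟨u, c, hu, rfl⟩ | ⟨u, hu, rfl⟩
  · rw [unit_mul_pow_dvd_iff hu, ell_dvd_Dm_iff] at hdvd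
    have h3 : 3 ≤ rootMultiplicity c (DD f g) :=
      (le_rootMultiplicity_iff (DD_ne hk2 hk3 f g hS)).2 hdvd
    have h2 : rootMultiplicity c (DD f g) ≤ 2 :=
      rm_le_two hk2 hk3 (FP f) (GP g) (hsing1 f g hS) (DD_ne hk2 hk3 f g hS) c
    omega
  · rw [unit_mul_pow_dvd_iff hu, X1_dvd_Dm_iff] at hdvd
    have h3 : 3 ≤ rootMultiplicity 0 (DD (frev f) (grev g)) :=
      (le_rootMultiplicity_iff (DDrev_ne hk2 hk3 f g hS)).2 hdvd
    have h2 : rootMultiplicity 0 (DD (frev f) (grev g)) ≤ 2 :=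
      rm_le_two hk2 hk3 (FP (frev f)) (GP (grev g)) (hsing2 f g hS)
        (DDrev_ne hk2 hk3 f g hS) 0
    omega

lemma eval_fpoly_c1 (c : k) : MvPolynomial.eval ![c, 1] (fpoly f) = (FP f).eval c := by
  rw [← eval_phi1, phi1_fpoly]

include hk2 hk3 hS in
lemma part3 : ∀ l : MvPolynomial (Fin 2) k, l ≠ 0 → l.IsHomogeneous 1 →
    l ^ 2 ∣ Dm f g → l ∣ fpoly f := by
  intro l hl0 hl hdvd
  rcases l_struct l hl0 hl with ⟨u, c, hu, rfl⟩ | ⟨u, hu, rfl⟩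
  · rw [unit_mul_pow_dvd_iff hu, ell_dvd_Dm_iff] at hdvd
    rw [unit_mul_dvd_iff hu]
    have hroot : (DD f g).eval c = 0 := by
      obtain ⟨W, hW⟩ := dvd_trans (dvd_pow_self (X - C c) two_ne_zero) hdvd
      rw [hW]
      simp
    have h2 : 2 ≤ rootMultiplicity c (DD f g) :=
      (le_rootMultiplicity_iff (DD_ne hk2 hk3 f g hS)).2 hdvd
    have hcases := rm_cases hk2 hk3 (FP f) (GP g) (hsing1 f g hS)
      (DD_ne hk2 hk3 f g hS) hroot
    rcases hcases with ⟨hF, h1⟩ | ⟨hF, _⟩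
    · have : rootMultiplicity c (DD f g) = 1 := h1
      omega
    · apply ell_dvd_of_root (fpoly_homog f)
      rw [eval_fpoly_c1]
      exact hF
  · rw [unit_mul_pow_dvd_iff hu, X1_dvd_Dm_iff] at hdvd
    rw [unit_mul_dvd_iff hu]
    have hroot : (DD (frev f) (grev g)).eval 0 = 0 := by
      obtain ⟨W, hW⟩ := dvd_trans (dvd_pow_self (X - C (0:k)) two_ne_zero) hdvd
      rw [hW]
      simp
    have h2 : 2 ≤ rootMultiplicity 0 (DD (frev f) (grev g)) :=
      (le_rootMultiplicity_iff (DDrev_ne hk2 hk3 f g hS)).2 hdvd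
    have hcases := rm_cases hk2 hk3 (FP (frev f)) (GP (grev g)) (hsing2 f g hS)
      (DDrev_ne hk2 hk3 f g hS) hroot
    rcases hcases with ⟨hF, h1⟩ | ⟨hF, _⟩
    · have : rootMultiplicity 0 (DD (frev f) (grev g)) = 1 := h1
      omega
    · have hX0 : (MvPolynomial.X 0 : MvPolynomial (Fin 2) k) ∣ fpoly (frev f) := by
        rw [← ell_zero_eq]
        apply ell_dvd_of_root (fpoly_homog (frev f))
        rw [eval_fpoly_c1]
        exact hF
      rw [← sigma_fpoly] at hX0
      rw [dvd_sigma_iff]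
      rw [show MvPolynomial.rename (Equiv.swap (0:Fin 2) 1) (MvPolynomial.X 1)
        = (MvPolynomial.X 0 : MvPolynomial (Fin 2) k) by simp]
      exact hX0


lemma FP_ne_zero (hf : fpoly f ≠ 0) : FP f ≠ 0 := by
  intro h0
  apply hf
  have hc : ∀ n : ℕ, (FP f).coeff n = 0 := by rw [h0]; simp
  have e0 := hc 0
  have e1 := hc 1
  have e2 := hc 2
  have e3 := hc 3
  have e4 := hc 4
  simp only [FP, Fin.sum_univ_five, coeff_add, coeff_C_mul, coeff_X_pow, Fin.isValue,
    show ((0:Fin 5):ℕ) = 0 from rfl, show ((1:Fin 5):ℕ) = 1 from rfl,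
    show ((2:Fin 5):ℕ) = 2 from rfl, show ((3:Fin 5):ℕ) = 3 from rfl,
    show ((4:Fin 5):ℕ) = 4 from rfl] at e0 e1 e2 e3 e4
  norm_num at e0 e1 e2 e3 e4
  simp [fpoly, Fin.sum_univ_five, e0, e1, e2, e3, e4]

include hk2 hk3 hS in
lemma counting :
    ({p : Projectivization k (Fin 2 → k) |
        linForm (p.rep 0) (p.rep 1) ∣ Dm f g ∧
        ¬ (linForm (p.rep 0) (p.rep 1)) ^ 2 ∣ Dm f g}.ncard
      + 2 * {p : Projectivization k (Fin 2 → k) |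
        (linForm (p.rep 0) (p.rep 1)) ^ 2 ∣ Dm f g ∧
        ¬ (linForm (p.rep 0) (p.rep 1)) ^ 3 ∣ Dm f g}.ncard = 12) ∧
    (fpoly f ≠ 0 →
      {p : Projectivization k (Fin 2 → k) |
        (linForm (p.rep 0) (p.rep 1)) ^ 2 ∣ Dm f g ∧
        ¬ (linForm (p.rep 0) (p.rep 1)) ^ 3 ∣ Dm f g}.ncard ≤ 4) := by
  classical
  have hDD : DD f g ≠ 0 := DD_ne hk2 hk3 f g hS
  have hDDr : DD (frev f) (grev g) ≠ 0 := DDrev_ne hk2 hk3 f g hS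
  have key : ∀ (m : ℕ) (c : k),
      ((linForm ((pip c).rep 0) ((pip c).rep 1)) ^ m ∣ Dm f g
        ↔ m ≤ rootMultiplicity c (DD f g)) := by
    intro m c
    obtain ⟨u, hu, hl⟩ := linForm_pip c
    rw [hl, unit_mul_pow_dvd_iff hu, ell_dvd_Dm_iff, ← le_rootMultiplicity_iff hDD]
  have keyinf : ∀ (m : ℕ),
      ((linForm ((infp k).rep 0) ((infp k).rep 1)) ^ m ∣ Dm f g
        ↔ m ≤ rootMultiplicity 0 (DD (frev f) (grev g))) := by
    intro m
    obtain ⟨u, hu, hl⟩ := linForm_inf (k := k)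
    rw [hl, unit_mul_pow_dvd_iff hu, X1_dvd_Dm_iff, ← le_rootMultiplicity_iff hDDr]
  set rmr := rootMultiplicity 0 (DD (frev f) (grev g)) with hrmr_def
  have hrm12 : ∀ c : k, (DD f g).eval c = 0 →
      rootMultiplicity c (DD f g) = 1 ∨ rootMultiplicity c (DD f g) = 2 := by
    intro c hc
    rcases rm_cases hk2 hk3 (FP f) (GP g) (hsing1 f g hS) hDD hc with ⟨_, h⟩ | ⟨_, h⟩
    · exact Or.inl h
    · exact Or.inr h
  have hmemroots : ∀ c : k, c ∈ (DD f g).roots.toFinset ↔ (DD f g).eval c = 0 := by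
    intro c
    rw [Multiset.mem_toFinset, Polynomial.mem_roots hDD]
    exact ⟨fun h => h, fun h => h⟩
  have hmemT : ∀ (m : ℕ), 1 ≤ m → ∀ c : k,
      (c ∈ (DD f g).roots.toFinset.filter (fun c => rootMultiplicity c (DD f g) = m)
        ↔ rootMultiplicity c (DD f g) = m) := by
    intro m hm c
    rw [Finset.mem_filter, hmemroots]
    refine ⟨fun h => h.2, fun h => ⟨?_, h⟩⟩
    have hpos : 0 < rootMultiplicity c (DD f g) := by omega
    exact ((Polynomial.rootMultiplicity_pos hDD).1 hpos : (DD f g).eval c = 0)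
  have hgen : ∀ m : ℕ, 1 ≤ m →
      {p : Projectivization k (Fin 2 → k) |
        (linForm (p.rep 0) (p.rep 1)) ^ m ∣ Dm f g ∧
        ¬ (linForm (p.rep 0) (p.rep 1)) ^ (m + 1) ∣ Dm f g}
      = (pip '' (((DD f g).roots.toFinset.filter
            (fun c => rootMultiplicity c (DD f g) = m) : Finset k) : Set k))
        ∪ (if rmr = m then {infp k} else (∅ : Set (Projectivization k (Fin 2 → k)))) := by
    intro m hm
    ext p
    simp only [Set.mem_setOf_eq, Set.mem_union, Set.mem_image, Finset.mem_coe]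
    rcases classify p with ⟨c, rfl⟩ | rfl
    · rw [key m c, key (m + 1) c]
      constructor
      · intro ⟨hc1, hc2⟩
        left
        exact ⟨c, (hmemT m hm c).2 (by omega), rfl⟩
      · rintro (⟨c', hc', heq⟩ | habs)
        · obtain rfl : c' = c := pip_inj heq
          have := (hmemT m hm c').1 hc'
          omega
        · exfalso
          by_cases h1 : rmr = m
          · rw [if_pos h1] at habs
            exact pip_ne_inf c (Set.mem_singleton_iff.1 habs)
          · rw [if_neg h1] at habs
            exact Set.notMem_empty _ habs
    · rw [keyinf m, keyinf (m + 1)]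
      constructor
      · intro ⟨hc1, hc2⟩
        right
        rw [if_pos (by omega : rmr = m)]
        exact Set.mem_singleton _
      · rintro (⟨c', hc', heq⟩ | habs)
        · exact absurd heq (pip_ne_inf c')
        · by_cases h1 : rmr = m
          · rw [if_pos h1] at habs
            omega
          · rw [if_neg h1] at habs
            exact absurd habs (Set.notMem_empty _)
  have hcard : ∀ m : ℕ, 1 ≤ m →
      ({p : Projectivization k (Fin 2 → k) |
        (linForm (p.rep 0) (p.rep 1)) ^ m ∣ Dm f g ∧
        ¬ (linForm (p.rep 0) (p.rep 1)) ^ (m + 1) ∣ Dm f g}).ncard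
      = ((DD f g).roots.toFinset.filter
            (fun c => rootMultiplicity c (DD f g) = m)).card
        + (if rmr = m then 1 else 0) := by
    intro m hm
    set T : Finset k := (DD f g).roots.toFinset.filter
      (fun c => rootMultiplicity c (DD f g) = m) with hT
    have hfin1 : (pip '' (T : Set k)).Finite := T.finite_toSet.image _
    have hfininf : (if rmr = m then {infp k}
        else (∅ : Set (Projectivization k (Fin 2 → k)))).Finite := by
      split
      · exact Set.finite_singleton _
      · exact Set.finite_empty
    have hdisj : Disjoint (pip '' (T : Set k))
        (if rmr = m then {infp k} else (∅ : Set (Projectivization k (Fin 2 → k)))) := by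
      rw [Set.disjoint_left]
      rintro p ⟨c, hc, rfl⟩ hinf
      by_cases h1 : rmr = m
      · rw [if_pos h1] at hinf
        exact pip_ne_inf c (Set.mem_singleton_iff.1 hinf)
      · rw [if_neg h1] at hinf
        exact Set.notMem_empty _ hinf
    rw [hgen m hm, Set.ncard_union_eq hdisj hfin1 hfininf,
      Set.ncard_image_of_injective _ pip_inj, Set.ncard_coe_finset]
    congr 1
    by_cases h1 : rmr = m
    · rw [if_pos h1, if_pos h1, Set.ncard_singleton]
    · rw [if_neg h1, if_neg h1, Set.ncard_empty]
  set T1 : Finset k := (DD f g).roots.toFinset.filter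
    (fun c => rootMultiplicity c (DD f g) = 1) with hT1
  set T2 : Finset k := (DD f g).roots.toFinset.filter
    (fun c => rootMultiplicity c (DD f g) = 2) with hT2
  have hcard1 : ({p : Projectivization k (Fin 2 → k) |
        linForm (p.rep 0) (p.rep 1) ∣ Dm f g ∧
        ¬ (linForm (p.rep 0) (p.rep 1)) ^ 2 ∣ Dm f g}).ncard
      = T1.card + (if rmr = 1 then 1 else 0) := by
    have h := hcard 1 le_rfl
    simp only [pow_one, Nat.reduceAdd] at h
    exact h
  have hcard2 : ({p : Projectivization k (Fin 2 → k) |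
        (linForm (p.rep 0) (p.rep 1)) ^ 2 ∣ Dm f g ∧
        ¬ (linForm (p.rep 0) (p.rep 1)) ^ 3 ∣ Dm f g}).ncard
      = T2.card + (if rmr = 2 then 1 else 0) := by
    have h := hcard 2 (by omega)
    simp only [Nat.reduceAdd] at h
    exact h
  have hndeg : (DD f g).natDegree = T1.card + 2 * T2.card := by
    have hsplit : Splits (DD f g) := IsAlgClosed.splits _
    have h1 : (DD f g).natDegree = Multiset.card (DD f g).roots := by
      have := hsplit.natDegree_eq_card_roots
      exact this
    rw [h1, ← Multiset.toFinset_sum_count_eq]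
    rw [Finset.sum_congr rfl (fun c _ => Polynomial.count_roots (DD f g))]
    rw [← Finset.sum_filter_add_sum_filter_not ((DD f g).roots.toFinset)
      (fun c => rootMultiplicity c (DD f g) = 1)]
    have e1 : ∑ c ∈ (DD f g).roots.toFinset.filter
        (fun c => rootMultiplicity c (DD f g) = 1), rootMultiplicity c (DD f g)
        = T1.card := by
      rw [Finset.sum_congr rfl (fun c hc => (Finset.mem_filter.1 hc).2),
        Finset.sum_const, smul_eq_mul, mul_one]
    have efilter : (DD f g).roots.toFinset.filter
        (fun c => ¬ rootMultiplicity c (DD f g) = 1) = T2 := by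
      apply Finset.ext
      intro c
      rw [Finset.mem_filter, hT2, Finset.mem_filter]
      constructor
      · intro ⟨hc, hne⟩
        refine ⟨hc, ?_⟩
        rcases hrm12 c ((hmemroots c).1 hc) with h | h
        · exact absurd h hne
        · exact h
      · intro ⟨hc, h2⟩
        exact ⟨hc, by omega⟩
    have e2 : ∑ c ∈ (DD f g).roots.toFinset.filter
        (fun c => ¬ rootMultiplicity c (DD f g) = 1), rootMultiplicity c (DD f g)
        = 2 * T2.card := by
      rw [efilter]
      rw [Finset.sum_congr rfl (fun c hc => (Finset.mem_filter.1 hc).2),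
        Finset.sum_const, smul_eq_mul, mul_comm]
    rw [e1, e2]
  have hnd12 : (DD f g).natDegree ≤ 12 := by
    have := natDegree_phi1_le (Dm_homog f g)
    rwa [phi1_Dm] at this
  have hinf2 : rmr ≤ 12 ∧ (DD f g).natDegree ≤ 12 - rmr := by
    have hdvd : (MvPolynomial.X 1 : MvPolynomial (Fin 2) k) ^ rmr ∣ Dm f g :=
      (X1_dvd_Dm_iff f g rmr).2 (pow_rootMultiplicity_dvd _ _)
    have h := natDegree_le_of_X1_pow_dvd (Dm_homog f g) (Dm_ne hk2 hk3 f g hS) hdvd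
    rwa [phi1_Dm] at h
  have hinf3 : 12 - (DD f g).natDegree ≤ rmr := by
    have h := X1_pow_sub_natDegree_dvd (Dm_homog f g)
    rw [phi1_Dm] at h
    exact (le_rootMultiplicity_iff hDDr).2 ((X1_dvd_Dm_iff f g _).1 h)
  have hrmr2 : rmr ≤ 2 :=
    rm_le_two hk2 hk3 (FP (frev f)) (GP (grev g)) (hsing2 f g hS) hDDr 0
  constructor
  · rw [hcard1, hcard2]
    have hifs : (if rmr = 1 then 1 else 0) + 2 * (if rmr = 2 then 1 else 0) = rmr := by
      interval_cases rmr <;> simp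
    have hsum : (DD f g).natDegree + rmr = 12 := by omega
    rw [show T1.card + (if rmr = 1 then 1 else 0)
        + 2 * (T2.card + (if rmr = 2 then 1 else 0))
        = (T1.card + 2 * T2.card)
          + ((if rmr = 1 then 1 else 0) + 2 * (if rmr = 2 then 1 else 0)) by ring,
      hifs, ← hndeg, hsum]
  · intro hf
    rw [hcard2]
    have hFP0 : FP f ≠ 0 := FP_ne_zero f hf
    have hsub : T2 ⊆ (FP f).roots.toFinset := by
      intro c hc
      have hc2 : rootMultiplicity c (DD f g) = 2 := (Finset.mem_filter.1 hc).2
      have hroot : (DD f g).eval c = 0 := (hmemroots c).1 (Finset.mem_filter.1 hc).1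
      rcases rm_cases hk2 hk3 (FP f) (GP g) (hsing1 f g hS) hDD hroot with ⟨hF, h1⟩ | ⟨hF, _⟩
      · have h1' : rootMultiplicity c (DD f g) = 1 := h1
        omega
      · rw [Multiset.mem_toFinset, Polynomial.mem_roots hFP0]
        exact hF
    have hT2card : T2.card ≤ (FP f).natDegree := by
      have h1 : T2.card ≤ (FP f).roots.toFinset.card := Finset.card_le_card hsub
      have h2 : (FP f).roots.toFinset.card ≤ Multiset.card (FP f).roots :=
        Multiset.toFinset_card_le _
      have h3 : Multiset.card (FP f).roots ≤ (FP f).natDegree :=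
        Polynomial.card_roots' _
      omega
    by_cases hm : rmr = 2
    · have hX1sq : (MvPolynomial.X 1 : MvPolynomial (Fin 2) k) ^ 2 ∣ Dm f g := by
        rw [X1_dvd_Dm_iff]
        rw [← hm]
        exact pow_rootMultiplicity_dvd _ _
      have hX1 : (MvPolynomial.X 1 : MvPolynomial (Fin 2) k) ∣ fpoly f :=
        part3 hk2 hk3 f g hS (MvPolynomial.X 1) (MvPolynomial.X_ne_zero _)
          (MvPolynomial.isHomogeneous_X _ _) hX1sq
      obtain ⟨Qf, hQf⟩ := hX1
      have hq := quotient_homog (MvPolynomial.isHomogeneous_X _ _)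
        (MvPolynomial.X_ne_zero _) (hQf ▸ fpoly_homog f) (hQf ▸ hf)
      have hFP3 : (FP f).natDegree ≤ 3 := by
        have hFPQ : FP f = phi1 Qf := by
          rw [← phi1_fpoly, hQf, map_mul,
            show phi1 (MvPolynomial.X 1 : MvPolynomial (Fin 2) k) = 1 by simp [phi1],
            one_mul]
        rw [hFPQ]
        have := natDegree_phi1_le hq.2
        omega
      rw [if_pos hm]
      omega
    · rw [if_neg hm]
      have hFP4 : (FP f).natDegree ≤ 4 := by
        have := natDegree_phi1_le (fpoly_homog f)
        rwa [phi1_fpoly] at this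
      omega

end Main
end DP1

/-- **Lemma**: on the discriminant `Δ = 4f³ + 27g²` of a smooth sextic over an algebraically
closed field: `Δ ≠ 0`, no linear form divides it thrice, linear forms dividing it twice divide
`f`, the number `M` of nodal fibers and `N` of cuspidal fibers satisfy `M + 2N = 12`, and
`M ≥ 4` if the fibration is not isotrivial. -/
theorem stmt6 (k : Type*) [Field k] [IsAlgClosed k]
    (hk2 : (2 : k) ≠ 0) (hk3 : (3 : k) ≠ 0)
    (f : Fin 5 → k) (g : Fin 7 → k)
    (hS : SmoothSextic k f g) :
    (4 * (fpoly f) ^ 3 + 27 * (gpoly g) ^ 2 ≠ 0) ∧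
    (∀ l : MvPolynomial (Fin 2) k, l ≠ 0 → l.IsHomogeneous 1 →
      ¬ l ^ 3 ∣ 4 * (fpoly f) ^ 3 + 27 * (gpoly g) ^ 2) ∧
    (∀ l : MvPolynomial (Fin 2) k, l ≠ 0 → l.IsHomogeneous 1 →
      l ^ 2 ∣ 4 * (fpoly f) ^ 3 + 27 * (gpoly g) ^ 2 → l ∣ fpoly f) ∧
    ({p : Projectivization k (Fin 2 → k) |
        linForm (p.rep 0) (p.rep 1) ∣ 4 * (fpoly f) ^ 3 + 27 * (gpoly g) ^ 2 ∧
        ¬ (linForm (p.rep 0) (p.rep 1)) ^ 2 ∣ 4 * (fpoly f) ^ 3 + 27 * (gpoly g) ^ 2}.ncard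
      + 2 * {p : Projectivization k (Fin 2 → k) |
        (linForm (p.rep 0) (p.rep 1)) ^ 2 ∣ 4 * (fpoly f) ^ 3 + 27 * (gpoly g) ^ 2 ∧
        ¬ (linForm (p.rep 0) (p.rep 1)) ^ 3 ∣
          4 * (fpoly f) ^ 3 + 27 * (gpoly g) ^ 2}.ncard = 12) ∧
    (fpoly f ≠ 0 →
      4 ≤ {p : Projectivization k (Fin 2 → k) |
        linForm (p.rep 0) (p.rep 1) ∣ 4 * (fpoly f) ^ 3 + 27 * (gpoly g) ^ 2 ∧
        ¬ (linForm (p.rep 0) (p.rep 1)) ^ 2 ∣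
          4 * (fpoly f) ^ 3 + 27 * (gpoly g) ^ 2}.ncard) := by
  refine ⟨?_, ?_, ?_, ?_, ?_⟩
  · exact DP1.Dm_ne hk2 hk3 f g hS
  · exact DP1.part2 hk2 hk3 f g hS
  · exact DP1.part3 hk2 hk3 f g hS
  · exact (DP1.counting hk2 hk3 f g hS).1
  · intro hf
    have h1 := (DP1.counting hk2 hk3 f g hS).1
    have h2 := (DP1.counting hk2 hk3 f g hS).2 hf
    show 4 ≤ {p : Projectivization k (Fin 2 → k) |
        linForm (p.rep 0) (p.rep 1) ∣ DP1.Dm f g ∧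
        ¬ (linForm (p.rep 0) (p.rep 1)) ^ 2 ∣ DP1.Dm f g}.ncard
    omega

end
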